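/- The group homomorphism from the Klein bottle group K = ⟨a, b ∣ a b a⁻¹ b⟩ to the group of bijections of ℝ × ℝ sending a to τ and b to σ, where σ(x, y) = (x + 1, y) and τ(x, y) = (−x, y + 1), is injective. -/

import Mathlib

namespace Stmt12

/-- The bijection `σ(x, y) = (x + 1, y)` of `ℝ × ℝ`. -/
def σ : Equiv.Perm (ℝ × ℝ) :=
  ⟨fun p => (p.1 + 1, p.2), fun p => (p.1 - 1, p.2),
    fun p => by simp, fun p => by simp⟩

/-- The bijection `τ(x, y) = (−x, y + 1)` of `ℝ × ℝ`. -/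
def τ : Equiv.Perm (ℝ × ℝ) :=
  ⟨fun p => (-p.1, p.2 + 1), fun p => (-p.1, p.2 - 1),
    fun p => by simp, fun p => by simp⟩

def a : FreeGroup (Fin 2) := FreeGroup.of 0
def b : FreeGroup (Fin 2) := FreeGroup.of 1

/-- The single relator `a b a⁻¹ b` of the Klein bottle group. -/
def kleinRels : Set (FreeGroup (Fin 2)) := {a * b * a⁻¹ * b}

/-- The Klein bottle group `K = ⟨a, b ∣ a b a⁻¹ b⟩`. -/
abbrev K := PresentedGroup kleinRels

noncomputable abbrev A : K := PresentedGroup.of 0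
noncomputable abbrev B : K := PresentedGroup.of 1

lemma relK : A * B * A⁻¹ * B = 1 := by
  have hmem : (a * b * a⁻¹ * b) ∈ Subgroup.normalClosure kleinRels :=
    Subgroup.subset_normalClosure rfl
  have h1 : (PresentedGroup.mk kleinRels (a * b * a⁻¹ * b) : K) = 1 :=
    PresentedGroup.mk_eq_one_iff.mpr hmem
  simpa [a, b, PresentedGroup.of, QuotientGroup.mk_mul, QuotientGroup.mk_inv] using h1

lemma conj_ab : A * B * A⁻¹ = B⁻¹ :=
  eq_inv_of_mul_eq_one_left relK

lemma conj_ab' : A⁻¹ * B * A = B⁻¹ := by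
  have h4 : A⁻¹ * B⁻¹ * A = B := by
    rw [← conj_ab]; group
  conv_rhs => rw [← h4]
  group

lemma conj1 (n : ℤ) : A * B ^ n * A⁻¹ = (B ^ n)⁻¹ := by
  have := map_zpow (MulAut.conj A) B n
  simp only [MulAut.conj_apply] at this
  rw [this, conj_ab, inv_zpow]

lemma conj2 (n : ℤ) : A⁻¹ * B ^ n * A = (B ^ n)⁻¹ := by
  have := map_zpow (MulAut.conj A⁻¹) B n
  simp only [MulAut.conj_apply, inv_inv] at this
  rw [this, conj_ab', inv_zpow]

lemma swapAB (m n : ℤ) : ∃ k : ℤ, A ^ m * B ^ n = B ^ k * A ^ m := by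
  induction m using Int.induction_on with
  | zero => exact ⟨n, by simp⟩
  | succ m ih =>
    obtain ⟨k, hk⟩ := ih
    refine ⟨-k, ?_⟩
    have h1 : A ^ ((m : ℤ) + 1) * B ^ n = A * (A ^ (m : ℤ) * B ^ n) := by group
    rw [h1, hk]
    calc A * (B ^ k * A ^ (m : ℤ)) = (A * B ^ k * A⁻¹) * A ^ ((m : ℤ) + 1) := by group
      _ = B ^ (-k) * A ^ ((m : ℤ) + 1) := by rw [conj1 k, zpow_neg]
  | pred m ih =>
    obtain ⟨k, hk⟩ := ih
    refine ⟨-k, ?_⟩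
    have h1 : A ^ (-(m : ℤ) - 1) * B ^ n = A⁻¹ * (A ^ (-(m : ℤ)) * B ^ n) := by group
    rw [h1, hk]
    calc A⁻¹ * (B ^ k * A ^ (-(m : ℤ)))
        = (A⁻¹ * B ^ k * A) * A ^ (-(m : ℤ) - 1) := by group
      _ = B ^ (-k) * A ^ (-(m : ℤ) - 1) := by rw [conj2 k, zpow_neg]

lemma normal_form (g : K) : ∃ n m : ℤ, g = B ^ n * A ^ m := by
  induction g using QuotientGroup.induction_on with
  | H w =>
    induction w using FreeGroup.induction_on with
    | C1 => exact ⟨0, 0, by simp; rfl⟩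
    | of x =>
      fin_cases x
      · refine ⟨0, 1, ?_⟩
        simp only [zpow_zero, zpow_one, one_mul]
        rfl
      · refine ⟨1, 0, ?_⟩
        simp only [zpow_zero, zpow_one, mul_one]
        rfl
    | inv_of x ih =>
      obtain ⟨n, m, hm⟩ := ih
      obtain ⟨k, hk⟩ := swapAB (-m) (-n)
      refine ⟨k, -m, ?_⟩
      rw [QuotientGroup.mk_inv, hm]
      change (B ^ n * A ^ m : K)⁻¹ = B ^ k * A ^ (-m)
      rw [mul_inv_rev, ← zpow_neg, ← zpow_neg, hk]
    | mul x y ihx ihy =>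
      obtain ⟨n, m, hm⟩ := ihx
      obtain ⟨n', m', hm'⟩ := ihy
      obtain ⟨k, hk⟩ := swapAB m n'
      refine ⟨n + k, m + m', ?_⟩
      rw [QuotientGroup.mk_mul, hm, hm']
      calc B ^ n * A ^ m * (B ^ n' * A ^ m')
          = B ^ n * (A ^ m * B ^ n') * A ^ m' := by group
        _ = B ^ n * (B ^ k * A ^ m) * A ^ m' := by rw [hk]
        _ = B ^ (n + k) * A ^ (m + m') := by rw [zpow_add, zpow_add]; group

lemma sigma_zpow (n : ℤ) (p : ℝ × ℝ) : (σ ^ n) p = (p.1 + n, p.2) := by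
  induction n using Int.induction_on with
  | zero => simp
  | succ n ih =>
    have : (σ ^ ((n : ℤ) + 1)) p = σ ((σ ^ (n : ℤ)) p) := by
      rw [add_comm, zpow_add, zpow_one, Equiv.Perm.mul_apply]
    rw [this, ih]
    simp [σ]
    ring
  | pred n ih =>
    have : (σ ^ (-(n : ℤ) - 1)) p = σ⁻¹ ((σ ^ (-(n : ℤ))) p) := by
      rw [show (-(n : ℤ) - 1) = -1 + -(n : ℤ) by ring, zpow_add, zpow_neg_one,
        Equiv.Perm.mul_apply]
    rw [this, ih]
    simp [σ, Equiv.Perm.inv_def, Equiv.symm]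
    ring

lemma tau_zpow (m : ℤ) (y : ℝ) : (τ ^ m) (0, y) = (0, y + m) := by
  induction m using Int.induction_on with
  | zero => simp
  | succ n ih =>
    have : (τ ^ ((n : ℤ) + 1)) (0, y) = τ ((τ ^ (n : ℤ)) (0, y)) := by
      rw [add_comm, zpow_add, zpow_one, Equiv.Perm.mul_apply]
    rw [this, ih]
    simp [τ]
    ring
  | pred n ih =>
    have : (τ ^ (-(n : ℤ) - 1)) (0, y) = τ⁻¹ ((τ ^ (-(n : ℤ))) (0, y)) := by
      rw [show (-(n : ℤ) - 1) = -1 + -(n : ℤ) by ring, zpow_add, zpow_neg_one,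
        Equiv.Perm.mul_apply]
    rw [this, ih]
    simp [τ, Equiv.Perm.inv_def, Equiv.symm]
    ring

/-- The group homomorphism from the Klein bottle group to `Perm (ℝ × ℝ)` sending `a` to
`τ` and `b` to `σ` is injective. -/
theorem klein_hom_injective (h : K →* Equiv.Perm (ℝ × ℝ))
    (ha : h (PresentedGroup.of 0) = τ) (hb : h (PresentedGroup.of 1) = σ) :
    Function.Injective h := by
  rw [injective_iff_map_eq_one]
  intro g hg
  obtain ⟨n, m, rfl⟩ := normal_form g
  have himg : h (B ^ n * A ^ m) = σ ^ n * τ ^ m := by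
    rw [map_mul, map_zpow, map_zpow, ha, hb]
  rw [himg] at hg
  have hpt : ((σ ^ n * τ ^ m : Equiv.Perm (ℝ × ℝ))) (0, 0) = ((n : ℝ), (m : ℝ)) := by
    rw [Equiv.Perm.mul_apply, tau_zpow, sigma_zpow]
    simp
  rw [hg] at hpt
  simp only [Equiv.Perm.coe_one, id_eq] at hpt
  have hn : (n : ℝ) = 0 := by
    have := congrArg Prod.fst hpt
    simpa using this.symm
  have hm : (m : ℝ) = 0 := by
    have := congrArg Prod.snd hpt
    simpa using this.symm
  have hn0 : n = 0 := by exact_mod_cast hn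
  have hm0 : m = 0 := by exact_mod_cast hm
  rw [hn0, hm0]
  simp

end Stmt12
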